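/- The generating function T(z) = Σ_{n≥0} t(n) z^n of λυ-terms satisfies the algebraic equation T(z) = z/(1-z) + z·T(z) + z·T(z)² + z·T(z)·S(z), where S(z) = Σ s(n) z^n is the generating function of substitutions satisfying S(z) = z·T(z) + z·S(z) + z. Consequently, as formal power series, T(z) = C(z) - 1 and S(z) = C(z)·z/(1-z), where C(z) = Σ_{n≥0} C(n) z^n is the Catalan generating function satisfying C(z) = 1 + z·C(z)². -/

import Mathlib

/-!
Decomposing a term or a substitution at its root constructor identifies each fiber of the size
function with a disjoint union of fibers of smaller sizes. By the symbolic method, disjoint unions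
add generating functions, pairs with additive size multiply them, and an extra root node
multiplies by `z`; this gives the two equations. Eliminating `S` through `(1 - z) S = z (T + 1)`
turns the first one into `T + 1 = 1 + z (T + 1)²`, which is the Catalan equation. Its power-series
solution is unique: two solutions `F`, `G` satisfy `(1 - z (F + G)) (F - G) = 0`, and the first
factor has constant coefficient `1`.
-/

open Finset Filter

mutual
inductive Tm : Type
  | idx : Nat → Tm
  | lam : Tm → Tm
  | app : Tm → Tm → Tm
  | clos : Tm → Subst → Tm
inductive Subst : Type
  | slash : Tm → Subst
  | lift : Subst → Subst
  | shift : Subst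
end

mutual
/-- Natural size of a λυ-term: every constructor weighs 1; index n has size n+1. -/
def Tm.size : Tm → Nat
  | .idx n => n + 1
  | .lam a => Tm.size a + 1
  | .app a b => Tm.size a + Tm.size b + 1
  | .clos a s => Tm.size a + Subst.size s + 1
/-- Natural size of an explicit substitution. -/
def Subst.size : Subst → Nat
  | .slash a => Tm.size a + 1
  | .lift s => Subst.size s + 1
  | .shift => 1
end

/-- Number of λυ-terms of size `n`. -/
noncomputable def tcount (n : ℕ) : ℕ := Nat.card {a : Tm // Tm.size a = n}

/-- Number of explicit substitutions of size `n`. -/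
noncomputable def scount (n : ℕ) : ℕ := Nat.card {s : Subst // Subst.size s = n}

open PowerSeries

/-- Generating function of λυ-terms. -/
noncomputable def Tz : PowerSeries ℚ := PowerSeries.mk fun n => (tcount n : ℚ)

/-- Generating function of substitutions. -/
noncomputable def Sz : PowerSeries ℚ := PowerSeries.mk fun n => (scount n : ℚ)

/-- Catalan generating function. -/
noncomputable def Cz : PowerSeries ℚ := PowerSeries.mk fun n => (catalan n : ℚ)

section SizeGF

variable {α β : Type*}

/-- An infinite fiber contributes `0` here, since `Nat.card` of an infinite type is `0`. -/
noncomputable def sizeGF (f : α → ℕ) : ℚ⟦X⟧ :=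
  mk fun n => (Nat.card {a // f a = n} : ℚ)

theorem sizeGF_congr {f : α → ℕ} {g : β → ℕ} (e : α ≃ β) (h : ∀ a, g (e a) = f a) :
    sizeGF g = sizeGF f := by
  ext n
  simp only [sizeGF, coeff_mk]
  exact congrArg _ (Nat.card_congr (e.subtypeEquiv fun a => by rw [h])).symm

theorem sizeGF_add_one (f : α → ℕ) : sizeGF (fun a => f a + 1) = X * sizeGF f := by
  ext (_ | n)
  · simp [sizeGF]
  · simp [sizeGF, coeff_succ_X_mul]

def prodFiberEquivSigma (f : α → ℕ) (g : β → ℕ) (n : ℕ) :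
    {p : α × β // f p.1 + g p.2 = n} ≃
      Σ ij : antidiagonal n, {a // f a = ij.1.1} × {b // g b = ij.1.2} where
  toFun p := ⟨⟨(f p.1.1, g p.1.2), mem_antidiagonal.2 p.2⟩, ⟨p.1.1, rfl⟩, ⟨p.1.2, rfl⟩⟩
  invFun x := ⟨(x.2.1, x.2.2), by rw [x.2.1.2, x.2.2.2]; exact mem_antidiagonal.1 x.1.2⟩
  left_inv _ := rfl
  right_inv := by
    rintro ⟨⟨⟨i, j⟩, hij⟩, ⟨a, ha⟩, ⟨b, hb⟩⟩
    simp only at ha hb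
    subst ha hb
    rfl

variable {f : α → ℕ} {g : β → ℕ} [∀ n, Finite {a // f a = n}]
  [∀ n, Finite {b // g b = n}]

instance (n : ℕ) : Finite {x : α ⊕ β // Sum.elim f g x = n} :=
  Finite.of_equiv ({a // f a = n} ⊕ {b // g b = n})
    (Equiv.subtypeSum (p := fun x => Sum.elim f g x = n)).symm

instance (n : ℕ) : Finite {p : α × β // f p.1 + g p.2 = n} :=
  Finite.of_equiv _ (prodFiberEquivSigma f g n).symm

theorem sizeGF_sumElim : sizeGF (Sum.elim f g) = sizeGF f + sizeGF g := by
  ext n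
  simp [sizeGF, Nat.card_congr Equiv.subtypeSum, Nat.card_sum]

theorem sizeGF_prod : sizeGF (fun p : α × β => f p.1 + g p.2) = sizeGF f * sizeGF g := by
  ext n
  simp only [sizeGF, coeff_mk, coeff_mul, Nat.card_congr (prodFiberEquivSigma f g n),
    Nat.card_sigma, Nat.card_prod]
  push_cast
  exact sum_coe_sort (antidiagonal n) fun ij =>
    (Nat.card {a // f a = ij.1} : ℚ) * Nat.card {b // g b = ij.2}

end SizeGF

theorem sizeGF_nat : sizeGF (fun k : ℕ => k) = (1 - X)⁻¹ := by
  have : sizeGF (fun k : ℕ => k) = PowerSeries.mk 1 := by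
    ext n
    simp [sizeGF]
  rw [this, PowerSeries.eq_inv_iff_mul_eq_one (by simp), mk_one_mul_one_sub_eq_one]

theorem sizeGF_unit : sizeGF (fun _ : Unit => 0) = 1 := by
  ext (_ | n) <;> simp [sizeGF, coeff_one]

theorem finite_setOf_size_le (n : ℕ) :
    {a : Tm | a.size ≤ n}.Finite ∧ {s : Subst | s.size ≤ n}.Finite := by
  induction n with
  | zero =>
    constructor <;> refine Set.finite_empty.subset ?_
    · rintro (k | a | ⟨a, b⟩ | ⟨a, s⟩) h <;> simp [Tm.size] at h
    · rintro (a | s | _) h <;> simp [Subst.size] at h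
  | succ n ih =>
    obtain ⟨hA, hS⟩ := ih
    constructor
    · refine ((((Set.finite_Iic n).image Tm.idx).union (hA.image Tm.lam)).union
        ((hA.image2 Tm.app hA).union (hA.image2 Tm.clos hS))).subset ?_
      rintro (k | a | ⟨a, b⟩ | ⟨a, s⟩) h <;> simp [Tm.size] at h ⊢ <;> omega
    · refine (((hA.image Subst.slash).union (hS.image Subst.lift)).union
        (Set.finite_singleton Subst.shift)).subset ?_
      rintro (a | s | _) h <;> simp [Subst.size] at h ⊢ <;> omega

instance (n : ℕ) : Finite {a : Tm // a.size = n} :=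
  ((finite_setOf_size_le n).1.subset fun _ (h : _ = n) => h.le).to_subtype

instance (n : ℕ) : Finite {s : Subst // s.size = n} :=
  ((finite_setOf_size_le n).2.subset fun _ (h : _ = n) => h.le).to_subtype

def Tm.equivSum : Tm ≃ ℕ ⊕ Tm ⊕ Tm × Tm ⊕ Tm × Subst where
  toFun
    | .idx n => .inl n
    | .lam a => .inr (.inl a)
    | .app a b => .inr (.inr (.inl (a, b)))
    | .clos a s => .inr (.inr (.inr (a, s)))
  invFun := Sum.elim .idx <| Sum.elim .lam <|
    Sum.elim (fun p => .app p.1 p.2) fun p => .clos p.1 p.2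
  left_inv a := by cases a <;> rfl
  right_inv := by rintro (n | a | ⟨a, b⟩ | ⟨a, s⟩) <;> rfl

def Subst.equivSum : Subst ≃ Tm ⊕ Subst ⊕ Unit where
  toFun
    | .slash a => .inl a
    | .lift s => .inr (.inl s)
    | .shift => .inr (.inr ())
  invFun := Sum.elim .slash (Sum.elim .lift fun _ => .shift)
  left_inv s := by cases s <;> rfl
  right_inv := by rintro (a | s | ⟨⟩) <;> rfl

theorem Tz_eq_X_mul : Tz = X * ((1 - X)⁻¹ + Tz + Tz * Tz + Tz * Sz) := by
  calc Tz = sizeGF (fun x => Sum.elim (fun k : ℕ => k) (Sum.elim Tm.size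
        (Sum.elim (fun p : Tm × Tm => p.1.size + p.2.size)
          fun p : Tm × Subst => p.1.size + p.2.size)) x + 1) :=
        (sizeGF_congr Tm.equivSum fun a => by cases a <;> rfl).symm
    _ = _ := by
      rw [sizeGF_add_one, sizeGF_sumElim, sizeGF_sumElim, sizeGF_sumElim, sizeGF_prod,
        sizeGF_prod, sizeGF_nat, add_assoc, add_assoc]
      rfl

theorem Sz_eq_X_mul : Sz = X * (Tz + Sz + 1) := by
  calc Sz = sizeGF (fun x => Sum.elim Tm.size (Sum.elim Subst.size fun _ : Unit => 0) x + 1) :=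
        (sizeGF_congr Subst.equivSum fun s => by cases s <;> rfl).symm
    _ = _ := by
      rw [sizeGF_add_one, sizeGF_sumElim, sizeGF_sumElim, sizeGF_unit, add_assoc]
      rfl

theorem Cz_eq_one_add_X_mul_sq : Cz = 1 + X * Cz ^ 2 := by
  have hC : Cz = map (Nat.castRingHom ℚ) catalanSeries := by
    ext n
    simp [Cz]
  have h := congrArg (PowerSeries.map (Nat.castRingHom ℚ)) catalanSeries_sq_mul_X_add_one
  simp only [map_add, map_mul, map_pow, map_X, map_one] at h
  rw [hC]
  linear_combination -h

theorem PowerSeries.eq_of_eq_one_add_X_mul_sq {R : Type*} [CommRing R] [IsDomain R]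
    {F G : R⟦X⟧} (hF : F = 1 + X * F ^ 2) (hG : G = 1 + X * G ^ 2) : F = G := by
  have hfac : (1 - X * (F + G)) * (F - G) = 0 := by linear_combination hF - hG
  have hne : 1 - X * (F + G) ≠ 0 := fun h => by simpa using congrArg constantCoeff h
  exact sub_eq_zero.1 ((mul_eq_zero.1 hfac).resolve_left hne)

/-- the generating-function equations and the Catalan closed forms. -/
theorem stmt6 :
    Tz = X * (1 - X)⁻¹ + X * Tz + X * Tz ^ 2 + X * Tz * Sz ∧
    Sz = X * Tz + X * Sz + X ∧
    Cz = 1 + X * Cz ^ 2 ∧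
    Tz = Cz - 1 ∧
    Sz = Cz * (X * (1 - X)⁻¹) := by
  have hU : (1 - X : ℚ⟦X⟧) * (1 - X)⁻¹ = 1 := PowerSeries.mul_inv_cancel _ (by simp)
  have hTC : Tz = Cz - 1 := by
    have hT1 : Tz + 1 = 1 + X * (Tz + 1) ^ 2 := by
      linear_combination (1 - X) * Tz_eq_X_mul + X * Tz * Sz_eq_X_mul + X * hU
    linear_combination PowerSeries.eq_of_eq_one_add_X_mul_sq hT1 Cz_eq_one_add_X_mul_sq
  have hSC : Sz = Cz * (X * (1 - X)⁻¹) := by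
    linear_combination -Sz * hU + (1 - X)⁻¹ * (Sz_eq_X_mul + X * hTC)
  exact ⟨by linear_combination Tz_eq_X_mul, by linear_combination Sz_eq_X_mul,
    Cz_eq_one_add_X_mul_sq, hTC, hSC⟩
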